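/- Any quantum query algorithm (given by unitaries U_0,...,U_T on ℂ^N ⊗ ℂ^M and a fixed initial pure state) whose final states ρ^k_T under the p-faulty oracles O^k_p satisfy D(ρ^k_T, ρ^0_T) ≥ 9/10 in normalized trace distance for every k ∈ {1,...,N} must have T > (p/(10(1-p)))·N. -/

import Mathlib

/-!
Compare each faulty run with the ideal run `ψ_{t+1} = U_t ψ_t`. Averaging the two branches of
every faulty query on the level of amplitudes gives a pure state `χ^k_t` whose projector is
dominated by `ρ̂^k_t`: by a variance identity, the faulty oracle preserves such a domination.
Cauchy–Schwarz and AM-GM bound the drift, `‖ψ_T - χ^k_T‖² ≤ ((1-p)/p) m_k`, where `m_k` is the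
total weight the ideal run puts on `k` at the queries. If `ρ ≥ |χ⟩⟨χ|` has trace one and
`‖χ‖ ≤ 1 = ‖ψ‖`, then `ρ - |ψ⟩⟨ψ|` is traceless with at most one negative eigenvalue, and that
eigenvalue is at least `-2‖ψ - χ‖`; so its trace norm is at most `4‖ψ - χ‖`. The distance
hypothesis therefore forces `m_k ≥ (81/400) p/(1-p)` for every `k`, while `∑_k m_k = T`.
-/

open Matrix ComplexOrder Finset

/-- Outer product `|v⟩⟨v|`. -/
noncomputable def outer {n : Type*} [Fintype n] (v : n → ℂ) : Matrix n n ℂ :=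
  Matrix.vecMulVec v (star v)

/-- The perfect Grover oracle `Ô^k = (I - 2|k⟩⟨k|) ⊗ I`. -/
noncomputable def oracleHat {N M : ℕ} (k : Fin N) :
    Matrix (Fin N × Fin M) (Fin N × Fin M) ℂ :=
  Matrix.diagonal fun x => if x.1 = k then -1 else 1

/-- The `p`-faulty oracle channel `O^k_p(ρ) = (1-p)·Ô^k ρ Ô^{k†} + p·ρ`. -/
noncomputable def faultyOracle {N M : ℕ} (p : ℝ) (k : Fin N)
    (ρ : Matrix (Fin N × Fin M) (Fin N × Fin M) ℂ) :
    Matrix (Fin N × Fin M) (Fin N × Fin M) ℂ :=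
  ((1 - p : ℝ) : ℂ) • (oracleHat k * ρ * (oracleHat k)ᴴ) + (p : ℂ) • ρ

/-- Projection of a vector onto the subspace `|k⟩ ⊗ ℂ^M`, i.e. `|k, β_k⟩`. -/
def projVec {N M : ℕ} (k : Fin N) (v : Fin N × Fin M → ℂ) : Fin N × Fin M → ℂ :=
  fun x => if x.1 = k then v x else 0

/-- The positive semidefinite square root of a positive semidefinite matrix (the definition
`Matrix.PosSemidef.sqrt` of the older Mathlib, which has since been removed). -/
noncomputable def Matrix.PosSemidef.sqrt {n : Type*} [Fintype n] [DecidableEq n] {𝕜 : Type*}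
    [RCLike 𝕜] {A : Matrix n n 𝕜} (hA : A.PosSemidef) : Matrix n n 𝕜 :=
  hA.1.eigenvectorUnitary.1 * diagonal ((↑) ∘ (√·) ∘ hA.1.eigenvalues) *
  (star hA.1.eigenvectorUnitary : Matrix n n 𝕜)

/-- The trace norm (sum of singular values) of a complex matrix. -/
noncomputable def traceNorm {n : Type*} [Fintype n] [DecidableEq n]
    (A : Matrix n n ℂ) : ℝ :=
  ((Matrix.posSemidef_conjTranspose_mul_self A).sqrt.trace).re

namespace FaultyGrover

section Vectors

variable {n : Type*} [Fintype n]

noncomputable def sqNorm (v : n → ℂ) : ℝ := ∑ i, ‖v i‖ ^ 2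

lemma sqNorm_nonneg (v : n → ℂ) : 0 ≤ sqNorm v :=
  sum_nonneg fun _ _ => sq_nonneg _

@[simp]
lemma sqNorm_zero : sqNorm (0 : n → ℂ) = 0 := by
  simp [sqNorm]

lemma star_dotProduct_self (v : n → ℂ) : star v ⬝ᵥ v = (sqNorm v : ℂ) := by
  simp only [dotProduct, sqNorm, Pi.star_apply, Complex.ofReal_sum, Complex.ofReal_pow]
  refine sum_congr rfl fun i _ => ?_
  rw [Complex.star_def, ← Complex.normSq_eq_conj_mul_self, Complex.normSq_eq_norm_sq,
    Complex.ofReal_pow]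

lemma norm_star_dotProduct_le (u v : n → ℂ) :
    ‖star u ⬝ᵥ v‖ ≤ √(sqNorm u) * √(sqNorm v) := by
  have h := norm_inner_le_norm (𝕜 := ℂ) (WithLp.toLp 2 u) (WithLp.toLp 2 v)
  rwa [EuclideanSpace.inner_eq_star_dotProduct, dotProduct_comm, EuclideanSpace.norm_eq,
    EuclideanSpace.norm_eq] at h

lemma sqNorm_add_smul (c : ℝ) (u w : n → ℂ) :
    sqNorm (u + (c : ℂ) • w) = sqNorm u + 2 * c * (star u ⬝ᵥ w).re + c ^ 2 * sqNorm w := by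
  have hre : (star u ⬝ᵥ w).re = ∑ i, ((u i).re * (w i).re + (u i).im * (w i).im) := by
    rw [dotProduct, Complex.re_sum]
    refine sum_congr rfl fun i _ => ?_
    simp [Complex.mul_re]
  simp only [sqNorm, hre, mul_sum, ← sum_add_distrib]
  refine sum_congr rfl fun i _ => ?_
  simp only [Pi.add_apply, Pi.smul_apply, smul_eq_mul, Complex.sq_norm, Complex.normSq_apply,
    Complex.add_re, Complex.add_im, Complex.mul_re, Complex.mul_im, Complex.ofReal_re,
    Complex.ofReal_im]
  ring

variable [DecidableEq n] {U : Matrix n n ℂ}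

lemma star_mulVec_dotProduct_mulVec (hU : U ∈ unitaryGroup n ℂ) (u w : n → ℂ) :
    star (U *ᵥ u) ⬝ᵥ (U *ᵥ w) = star u ⬝ᵥ w := by
  rw [star_mulVec, dotProduct_mulVec, vecMul_vecMul, ← star_eq_conjTranspose,
    mem_unitaryGroup_iff'.mp hU, vecMul_one]

lemma sqNorm_mulVec (hU : U ∈ unitaryGroup n ℂ) (u : n → ℂ) : sqNorm (U *ᵥ u) = sqNorm u := by
  have h := star_mulVec_dotProduct_mulVec hU u u
  rw [star_dotProduct_self, star_dotProduct_self] at h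
  exact_mod_cast h

lemma trace_mul_mul_conjTranspose (hU : U ∈ unitaryGroup n ℂ) (A : Matrix n n ℂ) :
    (U * A * Uᴴ).trace = A.trace := by
  rw [trace_mul_cycle, ← star_eq_conjTranspose, mem_unitaryGroup_iff'.mp hU, one_mul]

end Vectors

section Outer

variable {n : Type*} [Fintype n]

lemma outer_apply (v : n → ℂ) (i j : n) : outer v i j = v i * starRingEnd ℂ (v j) := rfl

lemma outer_posSemidef (v : n → ℂ) : (outer v).PosSemidef :=
  posSemidef_vecMulVec_self_star v

lemma trace_outer (v : n → ℂ) : (outer v).trace = (sqNorm v : ℂ) := by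
  rw [outer, trace_vecMulVec, dotProduct_comm, star_dotProduct_self]

lemma outer_mulVec (v w : n → ℂ) : outer v *ᵥ w = (star v ⬝ᵥ w) • v := by
  ext i
  simp only [mulVec, dotProduct, outer_apply, Pi.smul_apply, smul_eq_mul, Pi.star_apply,
    Complex.star_def, sum_mul]
  exact sum_congr rfl fun _ _ => by ring

lemma star_dotProduct_outer_mulVec (v x : n → ℂ) :
    star x ⬝ᵥ (outer v *ᵥ x) = ((‖star v ⬝ᵥ x‖ ^ 2 : ℝ) : ℂ) := by
  rw [outer_mulVec, dotProduct_smul, smul_eq_mul, Matrix.star_dotProduct x v, Complex.star_def,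
    mul_comm, ← Complex.normSq_eq_conj_mul_self, Complex.normSq_eq_norm_sq, Complex.ofReal_pow]

lemma mul_outer_mul_conjTranspose (A : Matrix n n ℂ) (v : n → ℂ) :
    A * outer v * Aᴴ = outer (A *ᵥ v) := by
  ext i j
  simp only [mul_apply, outer_apply, conjTranspose_apply, mulVec, dotProduct,
    Complex.star_def, sum_mul, mul_sum, map_sum, map_mul]
  exact sum_congr rfl fun _ _ => sum_congr rfl fun _ _ => by ring

lemma smul_outer_add_smul_outer_sub_outer (p : ℝ) (v w : n → ℂ) :
    ((1 - p : ℝ) : ℂ) • outer v + (p : ℂ) • outer w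
      - outer ((p : ℂ) • w + ((1 - p : ℝ) : ℂ) • v)
    = ((p * (1 - p) : ℝ) : ℂ) • outer (v - w) := by
  ext i j
  simp only [Matrix.sub_apply, Matrix.add_apply, Matrix.smul_apply, outer_apply, Pi.add_apply,
    Pi.smul_apply, Pi.sub_apply, smul_eq_mul, map_add, map_mul, map_sub, Complex.conj_ofReal]
  push_cast
  ring

lemma re_star_dotProduct_sub_outer_mulVec (ρ : Matrix n n ℂ) (ψ w : n → ℂ) :
    (star w ⬝ᵥ ((ρ - outer ψ) *ᵥ w)).re = (star w ⬝ᵥ (ρ *ᵥ w)).re - ‖star ψ ⬝ᵥ w‖ ^ 2 := by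
  rw [sub_mulVec, dotProduct_sub, star_dotProduct_outer_mulVec, Complex.sub_re,
    Complex.ofReal_re]

end Outer

section TraceNorm

variable {n : Type*} [Fintype n] [DecidableEq n]

open scoped MatrixOrder in
lemma _root_.Matrix.PosSemidef.sqrt_eq_cfcSqrt {A : Matrix n n ℂ} (hA : A.PosSemidef) :
    hA.sqrt = CFC.sqrt A := by
  rw [CFC.sqrt_eq_cfc, cfc_nnreal_eq_real _ A, hA.1.cfc_eq]
  simp only [IsHermitian.cfc, Matrix.PosSemidef.sqrt, Unitary.conjStarAlgAut_apply]
  congr 3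
  funext i
  simp [Real.coe_sqrt, Real.coe_toNNReal', hA.eigenvalues_nonneg i]

open scoped MatrixOrder in
lemma traceNorm_eq_sum_abs_eigenvalues {A : Matrix n n ℂ} (hA : A.IsHermitian) :
    traceNorm A = ∑ i, |hA.eigenvalues i| := by
  have habs : (posSemidef_conjTranspose_mul_self A).sqrt = CFC.abs A :=
    Matrix.PosSemidef.sqrt_eq_cfcSqrt _
  rw [traceNorm, habs, CFC.abs_eq_cfc_norm A hA, hA.cfc_eq, IsHermitian.cfc,
    Unitary.conjStarAlgAut_apply, trace_mul_cycle, Unitary.coe_star_mul_self, one_mul,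
    trace_diagonal]
  simp [Real.norm_eq_abs]

lemma traceNorm_le_of_trace_eq_zero {A : Matrix n n ℂ} (hA : A.IsHermitian) (htr : A.trace = 0)
    (hneg : ∀ i j, hA.eigenvalues i < 0 → hA.eigenvalues j < 0 → i = j)
    {c : ℝ} (hc : 0 ≤ c) (hlow : ∀ i, -c ≤ hA.eigenvalues i) :
    traceNorm A ≤ 2 * c := by
  have hsum : ∑ i, hA.eigenvalues i = 0 := by
    have h : ((∑ i, hA.eigenvalues i : ℝ) : ℂ) = 0 := by
      rw [Complex.ofReal_sum, ← htr]
      exact hA.trace_eq_sum_eigenvalues.symm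
    exact_mod_cast h
  set lam := hA.eigenvalues
  have habs : ∀ i, |lam i| = lam i + (if lam i < 0 then -2 * lam i else 0) := by
    intro i
    split_ifs with h
    · rw [abs_of_neg h]; ring
    · rw [abs_of_nonneg (not_lt.1 h)]; ring
  rw [traceNorm_eq_sum_abs_eigenvalues hA, sum_congr rfl fun i _ => habs i, sum_add_distrib,
    hsum, zero_add, sum_ite, sum_const_zero, add_zero]
  rcases (univ.filter fun i => lam i < 0).eq_empty_or_nonempty with hempty | ⟨j, hj⟩
  · rw [hempty, sum_empty]
    positivity
  · have hjneg : lam j < 0 := (mem_filter.1 hj).2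
    have hsingle : univ.filter (fun i => lam i < 0) = {j} :=
      eq_singleton_iff_unique_mem.2 ⟨hj, fun i hi => hneg i j (mem_filter.1 hi).2 hjneg⟩
    rw [hsingle, sum_singleton]
    linarith [hlow j]

end TraceNorm

section Spectral

variable {n : Type*} [Fintype n] [DecidableEq n]

lemma star_eigenvectorBasis_dotProduct {A : Matrix n n ℂ} (hA : A.IsHermitian) (i j : n) :
    star ⇑(hA.eigenvectorBasis i) ⬝ᵥ ⇑(hA.eigenvectorBasis j) = if i = j then 1 else 0 := by
  rw [dotProduct_comm, ← EuclideanSpace.inner_eq_star_dotProduct]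
  exact orthonormal_iff_ite.mp hA.eigenvectorBasis.orthonormal i j

lemma star_dotProduct_mulVec_eigenvectorBasis_combination {A : Matrix n n ℂ} (hA : A.IsHermitian)
    {i j : n} (hij : i ≠ j) (a b : ℂ) :
    star (a • ⇑(hA.eigenvectorBasis i) + b • ⇑(hA.eigenvectorBasis j)) ⬝ᵥ
        (A *ᵥ (a • ⇑(hA.eigenvectorBasis i) + b • ⇑(hA.eigenvectorBasis j)))
      = ((Complex.normSq a * hA.eigenvalues i + Complex.normSq b * hA.eigenvalues j : ℝ) : ℂ) := by
  have hsmul : ∀ (c : ℂ) (r : ℝ) (u : n → ℂ), c • r • u = (c * r) • u := fun c r u => by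
    ext x
    simp only [Pi.smul_apply, smul_eq_mul, Complex.real_smul, mul_assoc]
  simp only [mulVec_add, mulVec_smul, hA.mulVec_eigenvectorBasis, hsmul, star_add, star_smul,
    add_dotProduct, dotProduct_add, smul_dotProduct, dotProduct_smul,
    star_eigenvectorBasis_dotProduct, if_neg hij, if_neg hij.symm, smul_eq_mul,
    mul_zero, add_zero, zero_add, RCLike.star_def]
  push_cast
  rw [Complex.normSq_eq_conj_mul_self, Complex.normSq_eq_conj_mul_self]
  ring

/-- `ρ - |ψ⟩⟨ψ|` is positive semidefinite on `ψ^⊥`, which meets the span of any two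
eigenvectors. -/
lemma eq_of_eigenvalues_sub_outer_neg {ρ : Matrix n n ℂ} (hρ : ρ.PosSemidef) {ψ : n → ℂ}
    (hΔ : (ρ - outer ψ).IsHermitian) {i j : n} (hi : hΔ.eigenvalues i < 0)
    (hj : hΔ.eigenvalues j < 0) : i = j := by
  by_contra hij
  set v := fun l => ⇑(hΔ.eigenvectorBasis l)
  have hquad : ∀ w, -‖star ψ ⬝ᵥ w‖ ^ 2 ≤ (star w ⬝ᵥ ((ρ - outer ψ) *ᵥ w)).re := fun w => by
    have hρw : 0 ≤ (star w ⬝ᵥ (ρ *ᵥ w)).re := hρ.re_dotProduct_nonneg w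
    rw [re_star_dotProduct_sub_outer_mulVec]
    linarith
  by_cases hψi : star ψ ⬝ᵥ v i = 0
  · have h := hquad (v i)
    have heig : (star (v i) ⬝ᵥ ((ρ - outer ψ) *ᵥ v i)).re = hΔ.eigenvalues i :=
      (hΔ.eigenvalues_eq i).symm
    rw [hψi, heig, norm_zero] at h
    linarith
  · set w := (star ψ ⬝ᵥ v j) • v i + (-(star ψ ⬝ᵥ v i)) • v j
    have hψw : star ψ ⬝ᵥ w = 0 := by
      simp only [w, dotProduct_add, dotProduct_smul, smul_eq_mul]
      ring
    have h := hquad w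
    rw [hψw, star_dotProduct_mulVec_eigenvectorBasis_combination hΔ hij, Complex.ofReal_re,
      Complex.normSq_neg, norm_zero] at h
    have hpos : 0 < Complex.normSq (star ψ ⬝ᵥ v i) := Complex.normSq_pos.2 hψi
    nlinarith [Complex.normSq_nonneg (star ψ ⬝ᵥ v j)]

lemma neg_two_mul_sqrt_le_eigenvalues_sub_outer {ρ : Matrix n n ℂ} {ψ χ : n → ℂ}
    (hR : (ρ - outer χ).PosSemidef) (hψ : sqNorm ψ = 1) (hχ : sqNorm χ ≤ 1)
    (hΔ : (ρ - outer ψ).IsHermitian) (i : n) :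
    -(2 * √(sqNorm (ψ - χ))) ≤ hΔ.eigenvalues i := by
  set v := ⇑(hΔ.eigenvectorBasis i)
  have hv : √(sqNorm v) = 1 := by
    have h := star_eigenvectorBasis_dotProduct hΔ i i
    rw [if_pos rfl, star_dotProduct_self] at h
    rw [show sqNorm v = 1 by exact_mod_cast h, Real.sqrt_one]
  set a := star ψ ⬝ᵥ v
  set b := star χ ⬝ᵥ v
  have ha : ‖a‖ ≤ 1 := by
    simpa [hψ, hv] using norm_star_dotProduct_le ψ v
  have hb : ‖b‖ ≤ 1 := by
    simpa [hv] using (norm_star_dotProduct_le χ v).trans (by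
      rw [hv, mul_one]; exact Real.sqrt_le_one.mpr hχ)
  have hab : ‖a - b‖ ≤ √(sqNorm (ψ - χ)) := by
    simpa [hv, star_sub, sub_dotProduct] using norm_star_dotProduct_le (ψ - χ) v
  have hρv : ‖b‖ ^ 2 ≤ (star v ⬝ᵥ (ρ *ᵥ v)).re := by
    have h : 0 ≤ (star v ⬝ᵥ ((ρ - outer χ) *ᵥ v)).re := hR.re_dotProduct_nonneg v
    rw [re_star_dotProduct_sub_outer_mulVec] at h
    linarith
  have heig : hΔ.eigenvalues i = (star v ⬝ᵥ (ρ *ᵥ v)).re - ‖a‖ ^ 2 := by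
    rw [← re_star_dotProduct_sub_outer_mulVec]
    exact hΔ.eigenvalues_eq i
  have hdiff := norm_sub_norm_le a b
  nlinarith [mul_nonneg (sub_nonneg.2 hdiff) (add_nonneg (norm_nonneg a) (norm_nonneg b)),
    mul_nonneg (norm_nonneg (a - b)) (by linarith : (0 : ℝ) ≤ 2 - ‖a‖ - ‖b‖)]

lemma traceNorm_sub_outer_le {ρ : Matrix n n ℂ} {ψ χ : n → ℂ}
    (hR : (ρ - outer χ).PosSemidef) (htr : ρ.trace = 1) (hψ : sqNorm ψ = 1)
    (hχ : sqNorm χ ≤ 1) :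
    traceNorm (ρ - outer ψ) ≤ 4 * √(sqNorm (ψ - χ)) := by
  have hρ : ρ.PosSemidef := by simpa using hR.add (outer_posSemidef χ)
  have hΔ : (ρ - outer ψ).IsHermitian := hρ.isHermitian.sub (outer_posSemidef ψ).isHermitian
  have htr0 : (ρ - outer ψ).trace = 0 := by
    rw [trace_sub, htr, trace_outer, hψ, Complex.ofReal_one, sub_self]
  have h := traceNorm_le_of_trace_eq_zero hΔ htr0
    (fun _ _ => eq_of_eigenvalues_sub_outer_neg hρ hΔ) (by positivity)
    (neg_two_mul_sqrt_le_eigenvalues_sub_outer hR hψ hχ hΔ)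
  linarith

end Spectral

section Oracle

variable {N M : ℕ} (k : Fin N)

lemma oracleHat_conjTranspose : (oracleHat (M := M) k)ᴴ = oracleHat k := by
  rw [oracleHat, diagonal_conjTranspose]
  congr 1
  funext x
  by_cases h : x.1 = k <;> simp [h]

lemma oracleHat_mem_unitaryGroup : oracleHat (M := M) k ∈ unitaryGroup (Fin N × Fin M) ℂ := by
  rw [mem_unitaryGroup_iff, star_eq_conjTranspose, oracleHat_conjTranspose, oracleHat,
    diagonal_mul_diagonal, ← diagonal_one]
  congr 1
  funext x
  split_ifs <;> simp

lemma oracleHat_mulVec (v : Fin N × Fin M → ℂ) :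
    oracleHat k *ᵥ v = v - (2 : ℂ) • projVec k v := by
  funext x
  simp only [oracleHat, mulVec_diagonal, Pi.sub_apply, Pi.smul_apply, projVec, smul_eq_mul]
  split_ifs <;> ring

lemma trace_faultyOracle (p : ℝ) (σ : Matrix (Fin N × Fin M) (Fin N × Fin M) ℂ) :
    (faultyOracle p k σ).trace = σ.trace := by
  rw [faultyOracle, trace_add, trace_smul, trace_smul,
    trace_mul_mul_conjTranspose (oracleHat_mem_unitaryGroup k), smul_eq_mul, smul_eq_mul,
    ← add_mul]
  push_cast
  ring

/-- The faulty oracle maps `|w⟩⟨w|` to the projector onto `p w + (1-p) Ô^k w` plus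
`p(1-p)|Ô^k w - w⟩⟨Ô^k w - w|`, so it preserves domination of pure states. -/
lemma posSemidef_faultyOracle_sub_outer {p : ℝ} (hp0 : 0 ≤ p) (hp1 : p ≤ 1)
    {σ : Matrix (Fin N × Fin M) (Fin N × Fin M) ℂ} {w : Fin N × Fin M → ℂ}
    (h : (σ - outer w).PosSemidef) :
    (faultyOracle p k σ
      - outer ((p : ℂ) • w + ((1 - p : ℝ) : ℂ) • (oracleHat k *ᵥ w))).PosSemidef := by
  have hsplit : faultyOracle p k σ
      - outer ((p : ℂ) • w + ((1 - p : ℝ) : ℂ) • (oracleHat k *ᵥ w))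
      = ((1 - p : ℝ) : ℂ) • (oracleHat k * (σ - outer w) * (oracleHat k)ᴴ)
        + (p : ℂ) • (σ - outer w)
        + ((p * (1 - p) : ℝ) : ℂ) • outer (oracleHat k *ᵥ w - w) := by
    rw [faultyOracle, Matrix.mul_sub, Matrix.sub_mul, smul_sub, smul_sub,
      mul_outer_mul_conjTranspose, ← smul_outer_add_smul_outer_sub_outer p]
    abel
  have hcoe : ∀ {r : ℝ}, 0 ≤ r → (0 : ℂ) ≤ r := Complex.zero_le_real.2
  rw [hsplit]
  refine .add (.add ?_ ?_) ?_
  · exact (h.mul_mul_conjTranspose_same _).smul (hcoe (by linarith))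
  · exact h.smul (hcoe hp0)
  · exact (outer_posSemidef _).smul (hcoe (by nlinarith))

lemma star_dotProduct_projVec (u w : Fin N × Fin M → ℂ) :
    star u ⬝ᵥ projVec k w = star (projVec k u) ⬝ᵥ projVec k w := by
  refine sum_congr rfl fun x _ => ?_
  by_cases h : x.1 = k <;> simp [projVec, h]

lemma projVec_sub (u w : Fin N × Fin M → ℂ) :
    projVec k (u - w) = projVec k u - projVec k w := by
  funext x
  by_cases h : x.1 = k <;> simp [projVec, h]

lemma sum_sqNorm_projVec (v : Fin N × Fin M → ℂ) : ∑ k, sqNorm (projVec k v) = sqNorm v := by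
  unfold sqNorm
  rw [sum_comm]
  refine sum_congr rfl fun x _ => ?_
  simp only [projVec, apply_ite (‖·‖ ^ 2), norm_zero, ne_eq, OfNat.ofNat_ne_zero,
    not_false_eq_true, zero_pow, sum_ite_eq, mem_univ, if_true]

end Oracle

section Trajectories

variable {N M : ℕ} (p : ℝ) (k : Fin N) (U : ℕ → Matrix (Fin N × Fin M) (Fin N × Fin M) ℂ)
  (ψ₀ : Fin N × Fin M → ℂ)

noncomputable def idealState : ℕ → Fin N × Fin M → ℂ
  | 0 => ψ₀
  | t + 1 => U t *ᵥ idealState t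

noncomputable def faultyState : ℕ → Matrix (Fin N × Fin M) (Fin N × Fin M) ℂ
  | 0 => outer ψ₀
  | t + 1 => faultyOracle p k (U t * faultyState t * (U t)ᴴ)

noncomputable def avgState : ℕ → Fin N × Fin M → ℂ
  | 0 => ψ₀
  | t + 1 => (p : ℂ) • (U t *ᵥ avgState t)
      + ((1 - p : ℝ) : ℂ) • (oracleHat k *ᵥ (U t *ᵥ avgState t))

noncomputable def queryMass (T : ℕ) : ℝ :=
  ∑ t ∈ range T, sqNorm (projVec k (idealState U ψ₀ (t + 1)))

variable {U ψ₀}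

lemma sqNorm_idealState (hU : ∀ t, U t ∈ unitaryGroup (Fin N × Fin M) ℂ)
    (hψ₀ : sqNorm ψ₀ = 1) (t : ℕ) : sqNorm (idealState U ψ₀ t) = 1 := by
  induction t with
  | zero => exact hψ₀
  | succ t ih => rw [idealState, sqNorm_mulVec (hU t), ih]

lemma avgState_succ (t : ℕ) :
    avgState p k U ψ₀ (t + 1) = U t *ᵥ avgState p k U ψ₀ t
      + ((-(2 * (1 - p)) : ℝ) : ℂ) • projVec k (U t *ᵥ avgState p k U ψ₀ t) := by
  rw [avgState, oracleHat_mulVec]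
  funext x
  simp only [Pi.add_apply, Pi.smul_apply, Pi.sub_apply, smul_eq_mul]
  push_cast
  ring

lemma sqNorm_avgState_le_one {p : ℝ} (hp0 : 0 ≤ p) (hp1 : p ≤ 1)
    (hU : ∀ t, U t ∈ unitaryGroup (Fin N × Fin M) ℂ) (hψ₀ : sqNorm ψ₀ = 1) (t : ℕ) :
    sqNorm (avgState p k U ψ₀ t) ≤ 1 := by
  induction t with
  | zero => exact hψ₀.le
  | succ t ih =>
    set b := U t *ᵥ avgState p k U ψ₀ t
    have hb : sqNorm b = sqNorm (avgState p k U ψ₀ t) := sqNorm_mulVec (hU t) _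
    have hre : (star b ⬝ᵥ projVec k b).re = sqNorm (projVec k b) := by
      rw [star_dotProduct_projVec, star_dotProduct_self, Complex.ofReal_re]
    rw [avgState_succ, sqNorm_add_smul, hre, hb]
    nlinarith [mul_nonneg (mul_nonneg hp0 (sub_nonneg.2 hp1)) (sqNorm_nonneg (projVec k b))]

lemma posSemidef_faultyState_sub_outer_avgState {p : ℝ} (hp0 : 0 ≤ p) (hp1 : p ≤ 1) (t : ℕ) :
    (faultyState p k U ψ₀ t - outer (avgState p k U ψ₀ t)).PosSemidef := by
  induction t with
  | zero => simpa [faultyState, avgState] using PosSemidef.zero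
  | succ t ih =>
    have hconj : U t * faultyState p k U ψ₀ t * (U t)ᴴ - outer (U t *ᵥ avgState p k U ψ₀ t)
        = U t * (faultyState p k U ψ₀ t - outer (avgState p k U ψ₀ t)) * (U t)ᴴ := by
      rw [Matrix.mul_sub, Matrix.sub_mul, mul_outer_mul_conjTranspose]
    exact posSemidef_faultyOracle_sub_outer k hp0 hp1
      (hconj ▸ ih.mul_mul_conjTranspose_same (U t))

lemma trace_faultyState (hU : ∀ t, U t ∈ unitaryGroup (Fin N × Fin M) ℂ)
    (hψ₀ : sqNorm ψ₀ = 1) (t : ℕ) : (faultyState p k U ψ₀ t).trace = 1 := by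
  induction t with
  | zero => rw [faultyState, trace_outer, hψ₀, Complex.ofReal_one]
  | succ t ih => rw [faultyState, trace_faultyOracle, trace_mul_mul_conjTranspose (hU t), ih]

lemma sqNorm_idealState_sub_avgState_succ_le {p : ℝ} (hp0 : 0 < p) (hp1 : p ≤ 1)
    (hU : ∀ t, U t ∈ unitaryGroup (Fin N × Fin M) ℂ) (t : ℕ) :
    sqNorm (idealState U ψ₀ (t + 1) - avgState p k U ψ₀ (t + 1))
      ≤ sqNorm (idealState U ψ₀ t - avgState p k U ψ₀ t)
        + (1 - p) / p * sqNorm (projVec k (idealState U ψ₀ (t + 1))) := by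
  set a := idealState U ψ₀ (t + 1)
  set b := U t *ᵥ avgState p k U ψ₀ t
  have hdiff :
      a - avgState p k U ψ₀ (t + 1) = (a - b) + ((2 * (1 - p) : ℝ) : ℂ) • projVec k b := by
    rw [avgState_succ]
    funext x
    simp only [Pi.add_apply, Pi.sub_apply, Pi.smul_apply, smul_eq_mul]
    push_cast
    ring
  have hab : sqNorm (a - b) = sqNorm (idealState U ψ₀ t - avgState p k U ψ₀ t) := by
    rw [show a - b = U t *ᵥ (idealState U ψ₀ t - avgState p k U ψ₀ t) by rw [mulVec_sub]; rfl,
      sqNorm_mulVec (hU t)]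
  set x := √(sqNorm (projVec k a))
  set y := √(sqNorm (projVec k b))
  have hcross : (star (a - b) ⬝ᵥ projVec k b).re ≤ x * y - y ^ 2 := by
    rw [star_dotProduct_projVec, projVec_sub, star_sub, sub_dotProduct, star_dotProduct_self,
      Complex.sub_re, Complex.ofReal_re, Real.sq_sqrt (sqNorm_nonneg _)]
    linarith [Complex.re_le_norm (star (projVec k a) ⬝ᵥ projVec k b),
      norm_star_dotProduct_le (projVec k a) (projVec k b)]
  have hexpand : (1 - p) / p * (x - 2 * p * y) ^ 2
      = (1 - p) / p * x ^ 2 - 4 * (1 - p) * (x * y) + 4 * p * (1 - p) * y ^ 2 := by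
    field_simp
    ring
  rw [hdiff, sqNorm_add_smul, hab, ← Real.sq_sqrt (sqNorm_nonneg (projVec k a)),
    ← Real.sq_sqrt (sqNorm_nonneg (projVec k b))]
  nlinarith [mul_le_mul_of_nonneg_left hcross (sub_nonneg.2 hp1),
    mul_nonneg (div_nonneg (sub_nonneg.2 hp1) hp0.le) (sq_nonneg (x - 2 * p * y))]

lemma sqNorm_idealState_sub_avgState_le {p : ℝ} (hp0 : 0 < p) (hp1 : p ≤ 1)
    (hU : ∀ t, U t ∈ unitaryGroup (Fin N × Fin M) ℂ) (T : ℕ) :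
    sqNorm (idealState U ψ₀ T - avgState p k U ψ₀ T) ≤ (1 - p) / p * queryMass k U ψ₀ T := by
  induction T with
  | zero => simp [idealState, avgState, queryMass]
  | succ T ih =>
    rw [queryMass, sum_range_succ, mul_add, ← queryMass]
    linarith [sqNorm_idealState_sub_avgState_succ_le k (ψ₀ := ψ₀) hp0 hp1 hU T]

lemma sum_queryMass (hU : ∀ t, U t ∈ unitaryGroup (Fin N × Fin M) ℂ) (hψ₀ : sqNorm ψ₀ = 1)
    (T : ℕ) : ∑ k, queryMass k U ψ₀ T = T := by
  simp only [queryMass]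
  rw [sum_comm]
  simp [sum_sqNorm_projVec, sqNorm_idealState hU hψ₀]

lemma traceNorm_faultyState_sub_idealState_le {p : ℝ} (hp0 : 0 < p) (hp1 : p ≤ 1)
    (hU : ∀ t, U t ∈ unitaryGroup (Fin N × Fin M) ℂ) (hψ₀ : sqNorm ψ₀ = 1) (T : ℕ) :
    traceNorm (U T * faultyState p k U ψ₀ T * (U T)ᴴ - outer (idealState U ψ₀ (T + 1)))
      ≤ 4 * √((1 - p) / p * queryMass k U ψ₀ T) := by
  set χ := avgState p k U ψ₀ T
  have hR : (U T * faultyState p k U ψ₀ T * (U T)ᴴ - outer (U T *ᵥ χ)).PosSemidef := by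
    rw [← mul_outer_mul_conjTranspose, ← Matrix.sub_mul, ← Matrix.mul_sub]
    exact (posSemidef_faultyState_sub_outer_avgState k hp0.le hp1 T).mul_mul_conjTranspose_same _
  have htr : (U T * faultyState p k U ψ₀ T * (U T)ᴴ).trace = 1 := by
    rw [trace_mul_mul_conjTranspose (hU T), trace_faultyState p k hU hψ₀]
  have hχ : sqNorm (U T *ᵥ χ) ≤ 1 := by
    rw [sqNorm_mulVec (hU T)]
    exact sqNorm_avgState_le_one k hp0.le hp1 hU hψ₀ T
  have hdist : sqNorm (idealState U ψ₀ (T + 1) - U T *ᵥ χ)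
      = sqNorm (idealState U ψ₀ T - χ) := by
    rw [show idealState U ψ₀ (T + 1) - U T *ᵥ χ = U T *ᵥ (idealState U ψ₀ T - χ) by
      rw [mulVec_sub]; rfl, sqNorm_mulVec (hU T)]
  calc _ ≤ 4 * √(sqNorm (idealState U ψ₀ (T + 1) - U T *ᵥ χ)) :=
        traceNorm_sub_outer_le hR htr (sqNorm_idealState hU hψ₀ _) hχ
    _ ≤ 4 * √((1 - p) / p * queryMass k U ψ₀ T) := by
        rw [hdist]
        gcongr
        exact sqNorm_idealState_sub_avgState_le k hp0 hp1 hU T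

lemma queryMass_ge_of_le_traceNorm {p : ℝ} (hp0 : 0 < p) (hp1 : p < 1)
    (hU : ∀ t, U t ∈ unitaryGroup (Fin N × Fin M) ℂ) (hψ₀ : sqNorm ψ₀ = 1) {T : ℕ} {δ : ℝ}
    (hδ : 0 < δ) (hfar : δ ≤ traceNorm
      (U T * faultyState p k U ψ₀ T * (U T)ᴴ - outer (idealState U ψ₀ (T + 1)))) :
    (δ / 4) ^ 2 * (p / (1 - p)) ≤ queryMass k U ψ₀ T := by
  have h1p : 0 < 1 - p := by linarith
  have hsqrt : δ / 4 ≤ √((1 - p) / p * queryMass k U ψ₀ T) := by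
    linarith [traceNorm_faultyState_sub_idealState_le k hp0 hp1.le hU hψ₀ T]
  calc (δ / 4) ^ 2 * (p / (1 - p)) ≤ (1 - p) / p * queryMass k U ψ₀ T * (p / (1 - p)) := by
        gcongr
        exact (Real.le_sqrt' (by positivity)).1 hsqrt
    _ = queryMass k U ψ₀ T := by field_simp [h1p.ne']

end Trajectories

end FaultyGrover

open FaultyGrover

/-- Main theorem: any quantum query algorithm whose final states under the
`p`-faulty oracles are 9/10-far in trace distance from the fault-free final
state, for every marked element `k`, must make `T > (p/(10(1-p)))·N` queries. -/
theorem faulty_grover_lower_bound {N M T : ℕ} (p : ℝ) (hp0 : 0 < p) (hp1 : p < 1)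
    (U : ℕ → Matrix (Fin N × Fin M) (Fin N × Fin M) ℂ)
    (hU : ∀ t, U t ∈ Matrix.unitaryGroup (Fin N × Fin M) ℂ)
    (ψ₀ : Fin N × Fin M → ℂ) (hψ₀ : ∑ x, ‖ψ₀ x‖ ^ 2 = 1)
    (ρ ρhat : Fin N → ℕ → Matrix (Fin N × Fin M) (Fin N × Fin M) ℂ)
    (ρ₀ ρ₀hat : ℕ → Matrix (Fin N × Fin M) (Fin N × Fin M) ℂ)
    (hρhat0 : ∀ k, ρhat k 0 = outer ψ₀)
    (hρ : ∀ k t, ρ k t = U t * ρhat k t * (U t)ᴴ)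
    (hρhatS : ∀ k t, ρhat k (t + 1) = faultyOracle p k (ρ k t))
    (hρ₀hat0 : ρ₀hat 0 = outer ψ₀)
    (hρ₀ : ∀ t, ρ₀ t = U t * ρ₀hat t * (U t)ᴴ)
    (hρ₀hatS : ∀ t, ρ₀hat (t + 1) = ρ₀ t)
    (hdist : ∀ k, (1 / 2) * traceNorm (ρ k T - ρ₀ T) ≥ 9 / 10) :
    (T : ℝ) > (p / (10 * (1 - p))) * N := by
  have hfaulty : ∀ k t, ρhat k t = faultyState p k U ψ₀ t := by
    intro k t
    induction t with
    | zero => exact hρhat0 k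
    | succ t ih => rw [hρhatS, hρ, ih, faultyState]
  have hideal : ∀ t, ρ₀ t = outer (idealState U ψ₀ (t + 1)) := by
    intro t
    induction t with
    | zero => rw [hρ₀, hρ₀hat0, mul_outer_mul_conjTranspose]; rfl
    | succ t ih => rw [hρ₀, hρ₀hatS, ih, mul_outer_mul_conjTranspose]; rfl
  have hmass : ∀ k, (9 / 5 / 4) ^ 2 * (p / (1 - p)) ≤ queryMass k U ψ₀ T := fun k =>
    queryMass_ge_of_le_traceNorm k hp0 hp1 hU hψ₀ (by norm_num) (by
      rw [← hfaulty, ← hρ, ← hideal]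
      linarith [hdist k])
  have hN : N ≠ 0 := by
    rintro rfl
    simp at hψ₀
  have hT : (N : ℝ) * ((9 / 5 / 4) ^ 2 * (p / (1 - p))) ≤ T := by
    rw [← sum_queryMass hU hψ₀ T]
    simpa using card_nsmul_le_sum univ _ _ fun k _ => hmass k
  have hpq : 0 < p / (1 - p) := div_pos hp0 (by linarith)
  have hN1 : (1 : ℝ) ≤ N := by exact_mod_cast Nat.one_le_iff_ne_zero.2 hN
  rw [show p / (10 * (1 - p)) = 1 / 10 * (p / (1 - p)) by field_simp]
  nlinarith
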